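/- Let L ≥ 1, K_B > 0, and for s ∈ {1,…,L} let m_s > 0, n_s > 0, ν_s > 0, T_s > 0, u_s ∈ ℝ³, and let f_s : ℝ³ → ℝ be integrable with ∫ f_s(v) dv = n_s, ∫ v f_s(v) dv = n_s u_s, and ∫ |v|² f_s(v) dv = n_s |u_s|² + 3 n_s K_B T_s/m_s, with |v|² f_s integrable. Define ū = (Σ_s ν_s m_s n_s u_s)/(Σ_s ν_s m_s n_s), T̄ = (Σ_s ν_s n_s (m_s(|u_s|² − |ū|²) + 3K_B T_s))/(3K_B Σ_s ν_s n_s), and M(v; a, b) = (2πb)^{−3/2} exp(−|v−a|²/(2b)). Then the GS relaxation operators conserve total kinetic energy: Σ_{s=1}^L ∫ (m_s |v|²/2) ν_s ( n_s M(v; ū, K_B T̄/m_s) − f_s(v) ) dv = 0. -/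

import Mathlib

open scoped BigOperators
open MeasureTheory Real ProbabilityTheory NNReal

/-!
The Maxwellian with mean `a` and variance `b` is the product of one-dimensional Gaussian
densities, so its energy moment is `∫ |v|² M(v; a, b) dv = |a|² + 3b`. Hence species `s`
contributes `(m_s ν_s n_s / 2)(|ū|² + 3 K_B T̄ / m_s) - (ν_s n_s / 2)(m_s |u_s|² + 3 K_B T_s)`,
and the definition of `T̄` is exactly what makes these contributions sum to zero.
Jensen's inequality for `|·|²` at the weighted mean `ū` gives `T̄ > 0`, which is needed for
`M(·; ū, K_B T̄ / m_s)` to be a genuine Gaussian.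
-/

lemma integrable_sq_mul_gaussianPDFReal (μ : ℝ) {v : ℝ≥0} (hv : v ≠ 0) :
    Integrable fun x => x ^ 2 * gaussianPDFReal μ v x := by
  have h := (memLp_id_gaussianReal (μ := μ) (v := v) 2).integrable_sq
  rw [gaussianReal_of_var_ne_zero _ hv, gaussianPDF_def,
    integrable_withDensity_iff (by fun_prop) (ae_of_all _ fun _ => ENNReal.ofReal_lt_top)] at h
  refine h.congr (ae_of_all _ fun x => ?_)
  simp [ENNReal.toReal_ofReal (gaussianPDFReal_nonneg μ v x)]

lemma integral_sq_mul_gaussianPDFReal (μ : ℝ) {v : ℝ≥0} (hv : v ≠ 0) :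
    ∫ x, x ^ 2 * gaussianPDFReal μ v x = μ ^ 2 + v := by
  have h := variance_eq_sub (memLp_id_gaussianReal (μ := μ) (v := v) 2)
  simp only [variance_id_gaussianReal, Pi.pow_apply, id_eq] at h
  rw [integral_id_gaussianReal, integral_gaussianReal_eq_integral_smul hv] at h
  simp_rw [smul_eq_mul, mul_comm (gaussianPDFReal μ v _)] at h
  linarith

section ProductDensity

variable {ι : Type*} [Fintype ι] [DecidableEq ι] {p : ι → ℝ → ℝ} (q : ℝ → ℝ) (i : ι)

lemma comp_eval_mul_prod_eq_prod (x : ι → ℝ) :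
    q (x i) * ∏ j, p j (x j) = ∏ j, (if j = i then q (x j) else 1) * p j (x j) := by
  rw [Finset.prod_mul_distrib, Finset.prod_ite_eq' Finset.univ i, if_pos (Finset.mem_univ i)]

lemma integral_comp_eval_mul_prod (hp : ∀ j, ∫ t, p j t = 1) :
    ∫ x : ι → ℝ, q (x i) * ∏ j, p j (x j) = ∫ t, q t * p i t := by
  simp_rw [comp_eval_mul_prod_eq_prod q i]
  rw [integral_fintype_prod_volume_eq_prod (fun j t => (if j = i then q t else 1) * p j t)]
  have h : ∀ j, ∫ t, (if j = i then q t else 1) * p j t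
      = if j = i then ∫ t, q t * p i t else 1 := by
    intro j
    split_ifs with hj
    · subst hj; rfl
    · simp [hp j]
  simp_rw [h, Finset.prod_ite_eq' Finset.univ i, if_pos (Finset.mem_univ i)]

lemma integrable_comp_eval_mul_prod (hp : ∀ j, Integrable (p j))
    (hq : Integrable fun t => q t * p i t) :
    Integrable fun x : ι → ℝ => q (x i) * ∏ j, p j (x j) := by
  simp_rw [comp_eval_mul_prod_eq_prod q i]
  refine Integrable.fintype_prod (f := fun j t => (if j = i then q t else 1) * p j t) fun j => ?_
  split_ifs with hj
  · subst hj; exact hq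
  · simpa using hp j

end ProductDensity

section Maxwellian

variable {ι : Type*} [Fintype ι]

noncomputable def maxwellian (a : EuclideanSpace ℝ ι) (b : ℝ) (v : EuclideanSpace ℝ ι) : ℝ :=
  (2 * π * b) ^ (-(Fintype.card ι : ℝ) / 2) * exp (-‖v - a‖ ^ 2 / (2 * b))

lemma maxwellian_eq_prod_gaussianPDFReal (a : EuclideanSpace ℝ ι) (b : ℝ≥0)
    (v : EuclideanSpace ℝ ι) :
    maxwellian a b v = ∏ i, gaussianPDFReal (a i) b (v i) := by
  have hpos : 0 ≤ 2 * π * b := by positivity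
  simp only [maxwellian, gaussianPDFReal, Finset.prod_mul_distrib, Finset.prod_const,
    Finset.card_univ, ← exp_sum, EuclideanSpace.real_norm_sq_eq, PiLp.sub_apply,
    Finset.sum_div, ← Finset.sum_neg_distrib, neg_div]
  rw [Real.sqrt_eq_rpow, ← rpow_neg hpos, ← rpow_mul_natCast hpos]
  congr 2
  ring

lemma norm_sq_mul_maxwellian_toLp (a : EuclideanSpace ℝ ι) (b : ℝ≥0) (x : ι → ℝ) :
    ‖WithLp.toLp 2 x‖ ^ 2 * maxwellian a b (WithLp.toLp 2 x)
      = ∑ i, x i ^ 2 * ∏ j, gaussianPDFReal (a j) b (x j) := by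
  rw [maxwellian_eq_prod_gaussianPDFReal, EuclideanSpace.real_norm_sq_eq, Finset.sum_mul]

lemma integrable_norm_sq_mul_maxwellian (a : EuclideanSpace ℝ ι) {b : ℝ} (hb : 0 < b) :
    Integrable fun v => ‖v‖ ^ 2 * maxwellian a b v := by
  classical
  lift b to ℝ≥0 using hb.le
  rw [← (PiLp.volume_preserving_toLp ι).integrable_comp_emb
    (MeasurableEquiv.toLp 2 (ι → ℝ)).measurableEmbedding]
  simp only [Function.comp_def, norm_sq_mul_maxwellian_toLp]
  exact integrable_finsetSum _ fun i _ => integrable_comp_eval_mul_prod (· ^ 2) i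
    (fun j => integrable_gaussianPDFReal _ _)
    (integrable_sq_mul_gaussianPDFReal _ (by exact_mod_cast hb.ne'))

lemma integral_norm_sq_mul_maxwellian (a : EuclideanSpace ℝ ι) {b : ℝ} (hb : 0 < b) :
    ∫ v, ‖v‖ ^ 2 * maxwellian a b v = ‖a‖ ^ 2 + Fintype.card ι * b := by
  classical
  lift b to ℝ≥0 using hb.le
  have hb0 : b ≠ 0 := by exact_mod_cast hb.ne'
  rw [← (PiLp.volume_preserving_toLp ι).integral_comp
    (MeasurableEquiv.toLp 2 (ι → ℝ)).measurableEmbedding]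
  simp only [norm_sq_mul_maxwellian_toLp]
  rw [integral_finsetSum _ fun i _ => integrable_comp_eval_mul_prod (· ^ 2) i
    (fun j => integrable_gaussianPDFReal _ _) (integrable_sq_mul_gaussianPDFReal _ hb0)]
  simp only [integral_comp_eval_mul_prod (· ^ 2) _ fun j => integral_gaussianPDFReal_eq_one _ hb0,
    integral_sq_mul_gaussianPDFReal _ hb0, Finset.sum_add_distrib, EuclideanSpace.real_norm_sq_eq,
    Finset.sum_const, Finset.card_univ, nsmul_eq_mul]

lemma integral_energy_mul_relaxation (a : EuclideanSpace ℝ ι) {b : ℝ} (hb : 0 < b)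
    (m ν n : ℝ) {f : EuclideanSpace ℝ ι → ℝ} (hf : Integrable fun v => ‖v‖ ^ 2 * f v) :
    ∫ v, m * ‖v‖ ^ 2 / 2 * (ν * (n * maxwellian a b v - f v))
      = m * ν / 2 * (n * (‖a‖ ^ 2 + Fintype.card ι * b) - ∫ v, ‖v‖ ^ 2 * f v) := by
  have h : ∀ v, m * ‖v‖ ^ 2 / 2 * (ν * (n * maxwellian a b v - f v))
      = m * ν / 2 * (n * (‖v‖ ^ 2 * maxwellian a b v) - ‖v‖ ^ 2 * f v) := fun v => by ring
  simp_rw [h]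
  rw [integral_const_mul, integral_sub ((integrable_norm_sq_mul_maxwellian a hb).const_mul n) hf,
    integral_const_mul, integral_norm_sq_mul_maxwellian a hb]

end Maxwellian

lemma sum_mul_norm_sq_centerMass_le {α E : Type*} [NormedAddCommGroup E] [NormedSpace ℝ E]
    {s : Finset α} {w : α → ℝ} (u : α → E) (hw : ∀ i ∈ s, 0 ≤ w i) (hws : 0 < ∑ i ∈ s, w i) :
    (∑ i ∈ s, w i) * ‖s.centerMass w u‖ ^ 2 ≤ ∑ i ∈ s, w i * ‖u i‖ ^ 2 := by
  have h := (convexOn_univ_norm.pow (fun x _ => norm_nonneg x) 2).map_centerMass_le hw hws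
    (p := u) fun _ _ => Set.mem_univ _
  simp only [Finset.centerMass, Pi.pow_apply, Function.comp_apply, smul_eq_mul,
    le_inv_mul_iff₀ hws] at h
  exact h

lemma gs_temperature_numerator_pos {σ : Type*} [Fintype σ] [Nonempty σ] {E : Type*}
    [NormedAddCommGroup E] [NormedSpace ℝ E] {KB : ℝ} (hKB : 0 < KB) {m n ν T : σ → ℝ}
    (u : σ → E) (hm : ∀ s, 0 < m s) (hn : ∀ s, 0 < n s) (hν : ∀ s, 0 < ν s) (hT : ∀ s, 0 < T s) :
    0 < ∑ s, ν s * n s * (m s * (‖u s‖ ^ 2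
      - ‖Finset.univ.centerMass (fun s => ν s * m s * n s) u‖ ^ 2) + 3 * KB * T s) := by
  have hw : ∀ s, 0 < ν s * m s * n s := fun s => mul_pos (mul_pos (hν s) (hm s)) (hn s)
  have hJensen := sum_mul_norm_sq_centerMass_le u (fun s _ => (hw s).le)
    (Finset.sum_pos (fun s _ => hw s) Finset.univ_nonempty)
  have hthermal : 0 < ∑ s, ν s * n s * T s :=
    Finset.sum_pos (fun s _ => mul_pos (mul_pos (hν s) (hn s)) (hT s)) Finset.univ_nonempty
  have hsplit : ∑ s, ν s * n s * (m s * (‖u s‖ ^ 2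
      - ‖Finset.univ.centerMass (fun s => ν s * m s * n s) u‖ ^ 2) + 3 * KB * T s)
      = (∑ s, ν s * m s * n s * ‖u s‖ ^ 2
        - (∑ s, ν s * m s * n s) * ‖Finset.univ.centerMass (fun s => ν s * m s * n s) u‖ ^ 2)
        + 3 * KB * ∑ s, ν s * n s * T s := by
    simp only [Finset.mul_sum, Finset.sum_mul, ← Finset.sum_sub_distrib, ← Finset.sum_add_distrib]
    exact Finset.sum_congr rfl fun s _ => by ring
  rw [hsplit]
  nlinarith

theorem gs_total_energy_conservation_general
    (L : ℕ) (hL : 1 ≤ L) (KB : ℝ) (hKB : 0 < KB)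
    (m n ν T : Fin L → ℝ) (u : Fin L → EuclideanSpace ℝ (Fin 3))
    (hm : ∀ s, 0 < m s) (hn : ∀ s, 0 < n s) (hν : ∀ s, 0 < ν s) (hT : ∀ s, 0 < T s)
    (f : Fin L → EuclideanSpace ℝ (Fin 3) → ℝ)
    (hfv2int : ∀ s, Integrable (fun v => ‖v‖ ^ 2 * f s v))
    (hf2 : ∀ s, ∫ v, ‖v‖ ^ 2 * f s v = n s * ‖u s‖ ^ 2 + 3 * n s * KB * T s / m s)
    (Mx : EuclideanSpace ℝ (Fin 3) → EuclideanSpace ℝ (Fin 3) → ℝ → ℝ)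
    (hMx : ∀ v a b, Mx v a b = (2 * Real.pi * b) ^ (-(3 : ℝ) / 2)
      * Real.exp (-‖v - a‖ ^ 2 / (2 * b)))
    (ubar : EuclideanSpace ℝ (Fin 3))
    (hubar : ubar = (1 / ∑ s, ν s * m s * n s) • ∑ s, (ν s * m s * n s) • u s)
    (Tbar : ℝ)
    (hTbar : Tbar = (∑ s, ν s * n s * (m s * (‖u s‖ ^ 2 - ‖ubar‖ ^ 2) + 3 * KB * T s))
      / (3 * KB * ∑ s, ν s * n s)) :
    ∑ s, (∫ v, m s * ‖v‖ ^ 2 / 2 * (ν s * (n s * Mx v ubar (KB * Tbar / m s) - f s v)))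
      = 0 := by
  have : Nonempty (Fin L) := Fin.pos_iff_nonempty.mp hL
  have hubar_centerMass : ubar = Finset.univ.centerMass (fun s => ν s * m s * n s) u := by
    rw [hubar, Finset.centerMass, one_div]
  have hνn : 0 < ∑ s, ν s * n s :=
    Finset.sum_pos (fun s _ => mul_pos (hν s) (hn s)) Finset.univ_nonempty
  have hTbar_pos : 0 < Tbar := by
    rw [hTbar, hubar_centerMass]
    exact div_pos (gs_temperature_numerator_pos hKB u hm hn hν hT) (by positivity)
  have hTbar_eq : 3 * KB * Tbar * ∑ s, ν s * n s
      = ∑ s, ν s * n s * (m s * (‖u s‖ ^ 2 - ‖ubar‖ ^ 2) + 3 * KB * T s) := by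
    rw [hTbar]; field_simp
  have hMx_eq : Mx = fun v a b => maxwellian a b v := by
    ext v a b; simp [hMx, maxwellian]
  simp only [hMx_eq, fun s => integral_energy_mul_relaxation ubar
    (div_pos (mul_pos hKB hTbar_pos) (hm s)) (m s) (ν s) (n s) (hfv2int s), hf2,
    Fintype.card_fin, Nat.cast_ofNat]
  calc _ = ∑ s, (3 * KB * Tbar * (ν s * n s)
          - ν s * n s * (m s * (‖u s‖ ^ 2 - ‖ubar‖ ^ 2) + 3 * KB * T s)) / 2 :=
        Finset.sum_congr rfl fun s _ => by field_simp [(hm s).ne']; ring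
    _ = 0 := by rw [← Finset.sum_div, Finset.sum_sub_distrib, ← Finset.mul_sum, hTbar_eq,
        sub_self, zero_div]

theorem gs_total_energy_conservation
    (L : ℕ) (hL : 1 ≤ L) (KB : ℝ) (hKB : 0 < KB)
    (m n ν T : Fin L → ℝ) (u : Fin L → EuclideanSpace ℝ (Fin 3))
    (hm : ∀ s, 0 < m s) (hn : ∀ s, 0 < n s) (hν : ∀ s, 0 < ν s) (hT : ∀ s, 0 < T s)
    (f : Fin L → EuclideanSpace ℝ (Fin 3) → ℝ)
    (hfint : ∀ s, Integrable (f s))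
    (hfvint : ∀ s, Integrable (fun v => f s v • v))
    (hfv2int : ∀ s, Integrable (fun v => ‖v‖ ^ 2 * f s v))
    (hf0 : ∀ s, ∫ v, f s v = n s)
    (hf1 : ∀ s, (∫ v, f s v • v) = n s • u s)
    (hf2 : ∀ s, ∫ v, ‖v‖ ^ 2 * f s v = n s * ‖u s‖ ^ 2 + 3 * n s * KB * T s / m s)
    (Mx : EuclideanSpace ℝ (Fin 3) → EuclideanSpace ℝ (Fin 3) → ℝ → ℝ)
    (hMx : ∀ v a b, Mx v a b = (2 * Real.pi * b) ^ (-(3 : ℝ) / 2)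
      * Real.exp (-‖v - a‖ ^ 2 / (2 * b)))
    (ubar : EuclideanSpace ℝ (Fin 3))
    (hubar : ubar = (1 / ∑ s, ν s * m s * n s) • ∑ s, (ν s * m s * n s) • u s)
    (Tbar : ℝ)
    (hTbar : Tbar = (∑ s, ν s * n s * (m s * (‖u s‖ ^ 2 - ‖ubar‖ ^ 2) + 3 * KB * T s))
      / (3 * KB * ∑ s, ν s * n s)) :
    ∑ s, (∫ v, m s * ‖v‖ ^ 2 / 2 * (ν s * (n s * Mx v ubar (KB * Tbar / m s) - f s v)))
      = 0 :=
  gs_total_energy_conservation_general L hL KB hKB m n ν T u hm hn hν hT f hfv2int hf2 Mx hMx ubar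
    hubar Tbar hTbar
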